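/- arXiv:1210.4965 — 2 statements merged into one kernel-verified Lean document; each statement's English description precedes it below -/
import Mathlib

section
/- Consider the pro-3 group G = ⟨z⟩ ⋉ Z_3[ξ], where z has order 3, ξ is a primitive cube root of unity, Z_3[ξ] ≅ Z_3² additively, and z acts as multiplication by ξ. Then G is soluble, its maximal finite normal subgroup is trivial, d(G) = 2 = dim(G), but G is not powerful. -/
/-!
Conjugation by `z` acts on `A ≅ ℤ₃[ξ]` as multiplication by `ξ`, and `1 + ξ + ξ² = 0` gives
`(z^j a)³ = 1` for `a ∈ A` and `j = 1, 2`. So every element outside `A` has order `3`, and nothing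
outside `A` centralises `A`. A finite normal subgroup meets the torsion-free group `A` trivially,
hence centralises it, hence lies in it, hence is trivial. A torsion-free open subgroup lies in `A`,
and an open subgroup of `ℤ₃²` is not topologically cyclic, because the closure of a cyclic
subgroup lies in a line `ℤ₃ w`; this gives `dim G = 2`. Also `d(G) = 2`: `G` is non-abelian, hence
not topologically cyclic, and is topologically generated by `z` and `(1, 0)`. Finally, every cube
lies in the closed subgroup `A³ = 3ℤ₃²`, which does not contain the commutator
`[z, (1, 0)] = (-1, 1)`, so `G` is not powerful.
-/

/-- The minimal size of a topological generating set. -/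
noncomputable def topGen (G : Type*) [Group G] [TopologicalSpace G] [IsTopologicalGroup G] : ℕ :=
  sInf {n | ∃ S : Finset G, S.card = n ∧ (Subgroup.closure (S : Set G)).topologicalClosure = ⊤}

/-- Topologically finitely generated. -/
def TopFG (G : Type*) [Group G] [TopologicalSpace G] [IsTopologicalGroup G] : Prop :=
  ∃ S : Finset G, (Subgroup.closure (S : Set G)).topologicalClosure = ⊤

/-- A pro-`p` group: a compact, totally disconnected Hausdorff topological group in which
every open normal subgroup has index a power of `p`. -/
def IsProP (p : ℕ) (G : Type*) [Group G] [TopologicalSpace G] [IsTopologicalGroup G] : Prop :=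
  CompactSpace G ∧ TotallyDisconnectedSpace G ∧ T2Space G ∧
    ∀ N : Subgroup G, N.Normal → IsOpen (N : Set G) → ∃ k : ℕ, N.index = p ^ k

/-- The closed subgroup (topologically) generated by all `p`-th powers. -/
def pPow (p : ℕ) (G : Type*) [Group G] [TopologicalSpace G] [IsTopologicalGroup G] : Subgroup G :=
  (Subgroup.closure {x : G | ∃ g : G, g ^ p = x}).topologicalClosure

/-- The closed subgroup generated by the `p`-th powers of elements of a subgroup `N`. -/
def pPowIn (p : ℕ) {G : Type*} [Group G] [TopologicalSpace G] [IsTopologicalGroup G]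
    (N : Subgroup G) : Subgroup G :=
  (Subgroup.closure {x : G | ∃ g ∈ N, g ^ p = x}).topologicalClosure

/-- Powerful: `[G,G] ≤ G^p` (closures) for odd `p`, and `[G,G] ≤ G^4` for `p = 2`. -/
def Powerful (p : ℕ) (G : Type*) [Group G] [TopologicalSpace G] [IsTopologicalGroup G] : Prop :=
  (commutator G).topologicalClosure ≤ pPow (if p = 2 then 4 else p) G

/-- Uniform: topologically finitely generated, powerful and torsion-free. -/
def Uniform (p : ℕ) (G : Type*) [Group G] [TopologicalSpace G] [IsTopologicalGroup G] : Prop :=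
  TopFG G ∧ Powerful p G ∧ (∀ g : G, g ≠ 1 → ¬IsOfFinOrder g)

/-- Finite rank: a common bound on the number of topological generators of closed subgroups. -/
def FiniteRank (G : Type*) [Group G] [TopologicalSpace G] [IsTopologicalGroup G] : Prop :=
  ∃ r : ℕ, ∀ H : Subgroup G, IsClosed (H : Set G) → topGen H ≤ r

/-- The dimension of a `p`-adic analytic pro-`p` group: `d(U)` for any uniform open subgroup `U`. -/
noncomputable def dimension (p : ℕ) (G : Type*) [Group G] [TopologicalSpace G]
    [IsTopologicalGroup G] : ℕ :=
  sInf {n | ∃ H : Subgroup G, IsOpen (H : Set G) ∧ Uniform p H ∧ topGen H = n}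


open Topology Filter Multiplicative

namespace PadicInt

variable {p : ℕ} [Fact p.Prime]

theorem norm_p_lt_one : ‖(p : ℤ_[p])‖ < 1 :=
  Padic.norm_p_lt_one

theorem natCast_mul_ne_neg_one (u : ℤ_[p]) : (p : ℤ_[p]) * u ≠ -1 := fun h =>
  not_isUnit_iff.2 norm_p_lt_one (IsUnit.of_mul_eq_one (-u) (by rw [mul_neg, h, neg_neg]))

theorem topologicalClosure_closure_basis_eq_top :
    (Subgroup.closure {ofAdd ((1 : ℤ_[p]), (0 : ℤ_[p])),
      ofAdd ((0 : ℤ_[p]), (1 : ℤ_[p]))}).topologicalClosure = ⊤ := by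
  set S := Subgroup.closure {ofAdd ((1 : ℤ_[p]), (0 : ℤ_[p])), ofAdd ((0 : ℤ_[p]), (1 : ℤ_[p]))}
  have hlattice (v : ℤ × ℤ) : ofAdd ((v.1 : ℤ_[p]), (v.2 : ℤ_[p])) ∈ S := by
    have : ofAdd ((v.1 : ℤ_[p]), (v.2 : ℤ_[p])) =
        ofAdd ((1 : ℤ_[p]), (0 : ℤ_[p])) ^ v.1 * ofAdd ((0 : ℤ_[p]), (1 : ℤ_[p])) ^ v.2 := by
      ext <;> simp
    rw [this]
    exact S.mul_mem (S.zpow_mem (Subgroup.subset_closure (by simp)) _)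
      (S.zpow_mem (Subgroup.subset_closure (by simp)) _)
  have hdense : DenseRange fun v : ℤ × ℤ => ofAdd ((v.1 : ℤ_[p]), (v.2 : ℤ_[p])) :=
    ofAdd.surjective.denseRange.comp (denseRange_intCast.prodMap denseRange_intCast)
      continuous_ofAdd
  rw [SetLike.ext'_iff, Subgroup.topologicalClosure_coe, Subgroup.coe_top, ← dense_iff_closure_eq]
  exact hdense.mono (Set.range_subset_iff.2 hlattice)

theorem topologicalClosure_zpowers_notMem_nhds (w : Multiplicative (ℤ_[p] × ℤ_[p])) :
    ((Subgroup.zpowers w).topologicalClosure : Set _) ∉ 𝓝 (1 : Multiplicative (ℤ_[p] × ℤ_[p])) := by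
  intro hnhds
  set v := toAdd w
  have hline : ((Subgroup.zpowers w).topologicalClosure : Set _) ⊆
      Set.range fun c : ℤ_[p] => ofAdd (c • v) := by
    refine closure_minimal ?_ (isCompact_range (by fun_prop)).isClosed
    rintro _ ⟨k, rfl⟩
    exact ⟨k, by simp only [Int.cast_smul_eq_zsmul, ofAdd_zsmul, v, ofAdd_toAdd]⟩
  have hpow : Tendsto (fun n : ℕ => (p : ℤ_[p]) ^ n) atTop (𝓝 0) :=
    tendsto_pow_atTop_nhds_zero_of_norm_lt_one norm_p_lt_one
  have h1 : Tendsto (fun n : ℕ => ofAdd ((p : ℤ_[p]) ^ n, (0 : ℤ_[p]))) atTop (𝓝 1) :=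
    (continuous_ofAdd.tendsto 0).comp (hpow.prodMk_nhds tendsto_const_nhds)
  have h2 : Tendsto (fun n : ℕ => ofAdd ((0 : ℤ_[p]), (p : ℤ_[p]) ^ n)) atTop (𝓝 1) :=
    (continuous_ofAdd.tendsto 0).comp (tendsto_const_nhds.prodMk_nhds hpow)
  -- `(pⁿ, 0)` and `(0, pⁿ)` both tend to `0`, but no line `ℤ_[p] • v` contains both.
  obtain ⟨n, hn1, hn2⟩ := ((h1.eventually_mem hnhds).and (h2.eventually_mem hnhds)).exists
  obtain ⟨c, hc⟩ := hline hn1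
  obtain ⟨d, hd⟩ := hline hn2
  simp only [EmbeddingLike.apply_eq_iff_eq, Prod.ext_iff, Prod.smul_fst, Prod.smul_snd,
    smul_eq_mul] at hc hd
  have : (p : ℤ_[p]) ^ n * p ^ n = 0 :=
    calc (p : ℤ_[p]) ^ n * p ^ n = (c * v.1) * (d * v.2) := by rw [hc.1, hd.2]
      _ = (c * v.2) * (d * v.1) := by ring
      _ = 0 := by rw [hc.2, zero_mul]
  exact pow_ne_zero n (Nat.cast_ne_zero.2 (Fact.out : p.Prime).ne_zero) (mul_self_eq_zero.1 this)

end PadicInt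

theorem Subgroup.isClosed_of_continuous_mulEquiv_symm {G M : Type*} [Group G] [TopologicalSpace G]
    [T2Space G] [Group M] [TopologicalSpace M] [CompactSpace M] {A : Subgroup G} (e : A ≃* M)
    (he : Continuous e.symm) : IsClosed (A : Set G) := by
  have : (A : Set G) = Set.range fun m => (e.symm m : G) := by
    ext x
    exact ⟨fun hx => ⟨e ⟨x, hx⟩, by simp⟩, by rintro ⟨m, rfl⟩; exact (e.symm m).2⟩
  rw [this]
  exact (isCompact_range (continuous_subtype_val.comp he)).isClosed

section TopologicalGroup

variable {G : Type*} [Group G] [TopologicalSpace G] [IsTopologicalGroup G]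

theorem Subgroup.eq_top_of_isClosed_of_subset {S : Set G}
    (hS : (Subgroup.closure S).topologicalClosure = ⊤) {C : Subgroup G}
    (hC : IsClosed (C : Set G)) (hSC : S ⊆ C) : C = ⊤ :=
  top_unique (hS ▸ Subgroup.topologicalClosure_minimal _ ((Subgroup.closure_le C).2 hSC) hC)

theorem le_topGen {n : ℕ} (hfg : TopFG G)
    (hle : ∀ S : Finset G, (Subgroup.closure (S : Set G)).topologicalClosure = ⊤ → n ≤ S.card) :
    n ≤ topGen G := by
  obtain ⟨S, hS⟩ := hfg
  exact le_csInf ⟨S.card, S, rfl, hS⟩ (by rintro _ ⟨T, rfl, hT⟩; exact hle T hT)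

theorem topGen_eq {n : ℕ} {S : Finset G}
    (hS : (Subgroup.closure (S : Set G)).topologicalClosure = ⊤) (hcard : S.card = n)
    (hle : ∀ T : Finset G, (Subgroup.closure (T : Set G)).topologicalClosure = ⊤ → n ≤ T.card) :
    topGen G = n :=
  le_antisymm (Nat.sInf_le ⟨S, hcard, hS⟩) (le_topGen ⟨S, hS⟩ hle)

theorem exists_topologicalClosure_zpowers_eq_top {S : Finset G}
    (hS : (Subgroup.closure (S : Set G)).topologicalClosure = ⊤) (hcard : S.card ≤ 1) :
    ∃ g : G, (Subgroup.zpowers g).topologicalClosure = ⊤ := by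
  obtain ⟨g, hg⟩ := Finset.card_le_one_iff_subset_singleton.1 hcard
  refine ⟨g, top_unique (hS ▸ Subgroup.topologicalClosure_mono ?_)⟩
  rw [Subgroup.zpowers_eq_closure]
  exact Subgroup.closure_mono (by exact_mod_cast hg)

theorem commute_of_topologicalClosure_zpowers_eq_top [T2Space G] {g : G}
    (hg : (Subgroup.zpowers g).topologicalClosure = ⊤) (x y : G) : Commute x y := by
  let := (Subgroup.zpowers g).commGroupTopologicalClosure fun a b => Std.Commutative.comm a b
  have hx : x ∈ (Subgroup.zpowers g).topologicalClosure := hg ▸ Subgroup.mem_top x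
  have hy : y ∈ (Subgroup.zpowers g).topologicalClosure := hg ▸ Subgroup.mem_top y
  exact congrArg Subtype.val (mul_comm (⟨x, hx⟩ : (Subgroup.zpowers g).topologicalClosure) ⟨y, hy⟩)

theorem two_le_card_of_not_commute [T2Space G] {x y : G} (hxy : ¬Commute x y) {S : Finset G}
    (hS : (Subgroup.closure (S : Set G)).topologicalClosure = ⊤) : 2 ≤ S.card := by
  by_contra! hcard
  obtain ⟨g, hg⟩ := exists_topologicalClosure_zpowers_eq_top hS (Nat.le_of_lt_succ hcard)
  exact hxy (commute_of_topologicalClosure_zpowers_eq_top hg x y)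

theorem powerful_of_commute (p : ℕ) (hcomm : ∀ x y : G, Commute x y) : Powerful p G := by
  have : commutator G = ⊥ := by
    rw [commutator_def, eq_bot_iff, Subgroup.commutator_le]
    exact fun x _ y _ => Subgroup.mem_bot.2 (commutatorElement_eq_one_iff_commute.2 (hcomm x y))
  unfold Powerful pPow
  rw [this]
  exact Subgroup.topologicalClosure_mono bot_le

end TopologicalGroup

section Semidirect

variable {G : Type*} [Group G] {A : Subgroup G} [A.Normal] {z : G}

theorem exists_zpow_mul_mem (hsup : Subgroup.closure {z} ⊔ A = ⊤) (g : G) :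
    ∃ k : ℤ, ∃ a ∈ A, g = z ^ k * a := by
  obtain ⟨y, hy, a, ha, rfl⟩ := Subgroup.mem_sup_of_normal_right.1 (hsup ▸ Subgroup.mem_top g)
  obtain ⟨k, rfl⟩ := Subgroup.mem_zpowers_iff.1 (Subgroup.zpowers_eq_closure z ▸ hy)
  exact ⟨k, a, ha, rfl⟩

theorem exists_pow_mul_mem {n : ℕ} (hn : 0 < n) (hz : z ^ n = 1)
    (hsup : Subgroup.closure {z} ⊔ A = ⊤) (g : G) : ∃ j < n, ∃ a ∈ A, g = z ^ j * a := by
  obtain ⟨k, a, ha, rfl⟩ := exists_zpow_mul_mem hsup g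
  have h0 : 0 ≤ k % n := Int.emod_nonneg k (by omega)
  have hlt : k % n < n := Int.emod_lt_of_pos k (by omega)
  refine ⟨(k % n).toNat, by omega, a, ha, ?_⟩
  rw [zpow_eq_zpow_emod' k hz, ← zpow_natCast, Int.toNat_of_nonneg h0]

theorem isSolvable_of_sup_eq_top (hA : ∀ a ∈ A, ∀ b ∈ A, Commute a b)
    (hsup : Subgroup.closure {z} ⊔ A = ⊤) : Group.IsSolvable G := by
  have : Group.IsSolvable A := Group.isSolvable_of_comm fun a b => Subtype.ext (hA _ a.2 _ b.2)
  have : Group.IsSolvable (G ⧸ A) := Group.isSolvable_of_comm fun x y => by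
    obtain ⟨g, rfl⟩ := QuotientGroup.mk_surjective x
    obtain ⟨h, rfl⟩ := QuotientGroup.mk_surjective y
    obtain ⟨k, a, ha, rfl⟩ := exists_zpow_mul_mem hsup g
    obtain ⟨l, b, hb, rfl⟩ := exists_zpow_mul_mem hsup h
    simp only [QuotientGroup.mk_mul, QuotientGroup.mk_zpow, (QuotientGroup.eq_one_iff _).2 ha,
      (QuotientGroup.eq_one_iff _).2 hb, mul_one, zpow_mul_comm]
  exact Group.isSolvable_of_ker_le_range A.subtype (QuotientGroup.mk' A) (by simp)

theorem finite_quotient_of_sup_eq_top {n : ℕ} (hn : 0 < n) (hz : z ^ n = 1)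
    (hsup : Subgroup.closure {z} ⊔ A = ⊤) : Finite (G ⧸ A) := by
  refine Finite.of_surjective (fun j : Fin n => (z ^ (j : ℕ) : G ⧸ A)) fun x => ?_
  obtain ⟨g, rfl⟩ := QuotientGroup.mk_surjective x
  obtain ⟨j, hj, a, ha, rfl⟩ := exists_pow_mul_mem hn hz hsup g
  exact ⟨⟨j, hj⟩, by simp [(QuotientGroup.eq_one_iff a).2 ha]⟩

end Semidirect

theorem Subgroup.commute_of_mulEquiv {G M : Type*} [Group G] [CommGroup M] {A : Subgroup G}
    (e : A ≃* M) {a b : G} (ha : a ∈ A) (hb : b ∈ A) : Commute a b :=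
  congrArg Subtype.val
    (e.injective (by rw [map_mul, map_mul, mul_comm]) : (⟨a, ha⟩ * ⟨b, hb⟩ : A) = ⟨b, hb⟩ * ⟨a, ha⟩)

theorem Subgroup.eq_bot_of_finite_of_centralizer_le {G : Type*} [Group G] {A N : Subgroup G}
    [IsMulTorsionFree A] (hA : A.Normal) (hC : Subgroup.centralizer (A : Set G) ≤ A)
    (hN : N.Normal) (hfin : (N : Set G).Finite) : N = ⊥ := by
  have : Finite N := hfin.to_subtype
  have hdisj : Disjoint N A := by
    rw [Subgroup.disjoint_def]
    intro x hxN hxA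
    have hfo : IsOfFinOrder (⟨x, hxA⟩ : A) := A.subtype_injective.isOfFinOrder_iff.1
      (N.subtype.isOfFinOrder (isOfFinOrder_of_finite (⟨x, hxN⟩ : N)))
    exact congrArg Subtype.val hfo.eq_one'
  have hNA : N ≤ A := fun x hx => hC (Subgroup.mem_centralizer_iff.2 fun a ha =>
    (Subgroup.commute_of_normal_of_disjoint N A hN hA hdisj x a hx ha).symm)
  exact eq_bot_iff.2 fun x hx => hdisj.le_bot ⟨hx, hNA hx⟩

/-- Multiplication by `ξ` on `R[ξ] = R ⊕ Rξ`, in the basis `1, ξ`, where `ξ² = -1 - ξ`. -/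
def mulCubeRoot {R : Type*} [CommRing R] (v : R × R) : R × R := (-v.2, v.1 - v.2)

theorem mulCubeRoot_iterate_add {R : Type*} [CommRing R] {j : ℕ} (hj0 : j ≠ 0) (hj : j < 3)
    (v : R × R) : mulCubeRoot^[j] v + mulCubeRoot^[j * 2] v + v = 0 := by
  obtain rfl | rfl : j = 1 ∨ j = 2 := by omega
  all_goals ext <;> simp [mulCubeRoot] <;> ring

/-- `G = ⟨z⟩ ⋉ A`, where `eA` identifies `A` with `R[ξ]` and `z` acts by multiplication by `ξ`. -/
structure IsCubeRootSemidirect {G R : Type*} [Group G] [CommRing R] (A : Subgroup G)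
    (eA : A ≃* Multiplicative (R × R)) (z : G) : Prop where
  normal : A.Normal
  pow_three : z ^ 3 = 1
  sup_eq_top : Subgroup.closure {z} ⊔ A = ⊤
  conj_eq : ∀ a : A,
    eA ⟨z * a * z⁻¹, normal.conj_mem a a.2 z⟩ = ofAdd (mulCubeRoot (toAdd (eA a)))

namespace IsCubeRootSemidirect

variable {G R : Type*} [Group G] [CommRing R] {A : Subgroup G}
  {eA : A ≃* Multiplicative (R × R)} {z : G}

theorem isSolvable (hG : IsCubeRootSemidirect A eA z) : Group.IsSolvable G :=
  have := hG.normal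
  isSolvable_of_sup_eq_top (fun _ ha _ hb => Subgroup.commute_of_mulEquiv eA ha hb) hG.sup_eq_top

theorem toAdd_conj_pow (hG : IsCubeRootSemidirect A eA z) (k : ℕ) {a : G} (ha : a ∈ A) :
    toAdd (eA ⟨z ^ k * a * (z ^ k)⁻¹, hG.normal.conj_mem a ha _⟩) =
      mulCubeRoot^[k] (toAdd (eA ⟨a, ha⟩)) := by
  induction k with
  | zero => simp
  | succ k ih =>
    have hconj : (⟨z ^ (k + 1) * a * (z ^ (k + 1))⁻¹, hG.normal.conj_mem a ha _⟩ : A) =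
        ⟨z * (z ^ k * a * (z ^ k)⁻¹) * z⁻¹, hG.normal.conj_mem _ (hG.normal.conj_mem a ha _) z⟩ :=
      Subtype.ext (by group)
    rw [hconj, Function.iterate_succ_apply', ← ih]
    exact congrArg toAdd (hG.conj_eq ⟨_, hG.normal.conj_mem a ha _⟩)

theorem pow_three_eq_one_of_notMem (hG : IsCubeRootSemidirect A eA z) {g : G} (hg : g ∉ A) :
    g ^ 3 = 1 := by
  have := hG.normal
  obtain ⟨j, hj, a, ha, rfl⟩ := exists_pow_mul_mem three_pos hG.pow_three hG.sup_eq_top g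
  have hj0 : j ≠ 0 := by rintro rfl; simp_all
  have hcube (w : G) : (w * a) ^ 3 = (w * a * w⁻¹) * (w ^ 2 * a * (w ^ 2)⁻¹) * w ^ 3 * a := by
    simp only [pow_succ, pow_zero, one_mul]
    group
  have h3 : (z ^ j) ^ 3 = 1 := by rw [← pow_mul, mul_comm, pow_mul, hG.pow_three, one_pow]
  rw [hcube, h3, mul_one, ← pow_mul]
  have hsum : toAdd (eA (⟨_, hG.normal.conj_mem a ha (z ^ j)⟩ *
      ⟨_, hG.normal.conj_mem a ha (z ^ (j * 2))⟩ * ⟨a, ha⟩)) = 0 := by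
    rw [map_mul eA, map_mul eA, toAdd_mul, toAdd_mul, hG.toAdd_conj_pow, hG.toAdd_conj_pow]
    exact mulCubeRoot_iterate_add hj0 hj _
  simpa using congrArg Subtype.val (eA.map_eq_one_iff.1 (toAdd_eq_zero.1 hsum))

theorem not_commute_pow_symm_ofAdd [Nontrivial R] (hG : IsCubeRootSemidirect A eA z) {j : ℕ}
    (hj0 : j ≠ 0) (hj : j < 3) : ¬Commute (z ^ j) (eA.symm (ofAdd (1, 0)) : G) := by
  intro h
  have hfix : (⟨_, hG.normal.conj_mem _ (eA.symm (ofAdd (1, 0))).2 (z ^ j)⟩ : A) =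
      eA.symm (ofAdd (1, 0)) :=
    Subtype.ext (show z ^ j * _ * (z ^ j)⁻¹ = _ by rw [h.eq, mul_inv_cancel_right])
  have hrot := hG.toAdd_conj_pow j (eA.symm (ofAdd ((1 : R), (0 : R)))).2
  rw [hfix] at hrot
  obtain rfl | rfl : j = 1 ∨ j = 2 := by omega
  all_goals simp [mulCubeRoot, Prod.ext_iff] at hrot

theorem centralizer_le [Nontrivial R] (hG : IsCubeRootSemidirect A eA z) :
    Subgroup.centralizer (A : Set G) ≤ A := by
  have := hG.normal
  intro g hg
  obtain ⟨j, hj, a, ha, rfl⟩ := exists_pow_mul_mem three_pos hG.pow_three hG.sup_eq_top g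
  obtain rfl | hj0 := eq_or_ne j 0
  · simpa using ha
  refine absurd ?_ (hG.not_commute_pow_symm_ofAdd hj0 hj)
  have hb := (eA.symm (ofAdd ((1 : R), (0 : R)))).2
  have hgb : Commute (z ^ j * a) (eA.symm (ofAdd ((1 : R), (0 : R))) : G) :=
    (Subgroup.mem_centralizer_iff.1 hg _ hb).symm
  simpa using hgb.mul_left (Subgroup.commute_of_mulEquiv eA (A.inv_mem ha) hb)

theorem eq_bot_of_finite [Nontrivial R] [IsAddTorsionFree R] (hG : IsCubeRootSemidirect A eA z)
    {N : Subgroup G} (hN : N.Normal) (hfin : (N : Set G).Finite) : N = ⊥ :=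
  have : IsMulTorsionFree A := eA.injective.isMulTorsionFree eA.toMonoidHom
  Subgroup.eq_bot_of_finite_of_centralizer_le hG.normal hG.centralizer_le hN hfin

theorem symm_ofAdd_zero_one (hG : IsCubeRootSemidirect A eA z) :
    (eA.symm (ofAdd (0, 1)) : G) = z * eA.symm (ofAdd (1, 0)) * z⁻¹ := by
  have h := hG.conj_eq (eA.symm (ofAdd (1, 0)))
  simp only [MulEquiv.apply_symm_apply, toAdd_ofAdd, mulCubeRoot, neg_zero, sub_zero] at h
  rw [← h, MulEquiv.symm_apply_apply]

end IsCubeRootSemidirect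

section PadicLattice

variable {p : ℕ} [Fact p.Prime] {G : Type*} [Group G] [TopologicalSpace G] [IsTopologicalGroup G]
  {A : Subgroup G} (eA : A ≃* Multiplicative (ℤ_[p] × ℤ_[p]))

theorem topologicalClosure_closure_symm_basis_eq_top (heA' : Continuous eA.symm) :
    (Subgroup.closure {eA.symm (ofAdd (1, 0)), eA.symm (ofAdd (0, 1))}).topologicalClosure = ⊤ := by
  have := DenseRange.topologicalClosure_map_subgroup (f := eA.symm.toMonoidHom) heA'
    eA.symm.surjective.denseRange PadicInt.topologicalClosure_closure_basis_eq_top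
  rwa [MonoidHom.map_closure, Set.image_pair] at this

theorem uniform_of_mulEquiv (q : ℕ) (heA' : Continuous eA.symm) : Uniform q A := by
  classical
  have : IsMulTorsionFree A := eA.injective.isMulTorsionFree eA.toMonoidHom
  refine ⟨⟨{eA.symm (ofAdd (1, 0)), eA.symm (ofAdd (0, 1))}, ?_⟩,
    powerful_of_commute q fun x y => eA.injective (by rw [map_mul, map_mul, mul_comm]),
    fun g hg => not_isOfFinOrder_of_isMulTorsionFree hg⟩
  simpa using topologicalClosure_closure_symm_basis_eq_top eA heA'

theorem two_le_card_of_le_of_isOpen (heA : Continuous eA) (heA' : Continuous eA.symm)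
    {H : Subgroup G} (hHA : H ≤ A) (hH : IsOpen (H : Set G)) {S : Finset H}
    (hS : (Subgroup.closure (S : Set H)).topologicalClosure = ⊤) : 2 ≤ S.card := by
  by_contra! hcard
  obtain ⟨g, hg⟩ := exists_topologicalClosure_zpowers_eq_top hS (Nat.le_of_lt_succ hcard)
  set ψ : H →* Multiplicative (ℤ_[p] × ℤ_[p]) := eA.toMonoidHom.comp (Subgroup.inclusion hHA)
  set L := (Subgroup.zpowers (ψ g)).topologicalClosure
  have hψ : Continuous ψ := heA.comp (continuous_inclusion hHA)
  have hψL : ∀ x : H, ψ x ∈ L := by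
    have hle := Subgroup.topologicalClosure_minimal (Subgroup.zpowers g) (t := L.comap ψ)
      (Subgroup.zpowers_le.2 (show ψ g ∈ L from
        Subgroup.le_topologicalClosure _ (Subgroup.mem_zpowers _)))
      ((Subgroup.isClosed_topologicalClosure _).preimage hψ)
    rw [hg] at hle
    exact fun x => hle (Subgroup.mem_top x)
  have hU : IsOpen {m | (eA.symm m : G) ∈ H} := hH.preimage (continuous_subtype_val.comp heA')
  refine PadicInt.topologicalClosure_zpowers_notMem_nhds (ψ g)
    (Filter.mem_of_superset (hU.mem_nhds (by simp)) fun m hm => ?_)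
  have hψm : ψ ⟨_, hm⟩ = m := eA.apply_symm_apply m
  exact hψm ▸ hψL ⟨_, hm⟩

end PadicLattice

namespace IsCubeRootSemidirect

variable {p : ℕ} [Fact p.Prime] {G : Type*} [Group G] [TopologicalSpace G] [IsTopologicalGroup G]
  {A : Subgroup G} {eA : A ≃* Multiplicative (ℤ_[p] × ℤ_[p])} {z : G}

theorem isOpen [T2Space G] (hG : IsCubeRootSemidirect A eA z) (heA' : Continuous eA.symm) :
    IsOpen (A : Set G) := by
  have := hG.normal
  have := finite_quotient_of_sup_eq_top three_pos hG.pow_three hG.sup_eq_top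
  have := Subgroup.finiteIndex_of_finite_quotient (H := A)
  exact A.isOpen_of_isClosed_of_finiteIndex (A.isClosed_of_continuous_mulEquiv_symm eA heA')

theorem topologicalClosure_closure_pair_eq_top (hG : IsCubeRootSemidirect A eA z)
    (heA' : Continuous eA.symm) :
    (Subgroup.closure {z, (eA.symm (ofAdd (1, 0)) : G)}).topologicalClosure = ⊤ := by
  set C :=
    (Subgroup.closure {z, (eA.symm (ofAdd ((1 : ℤ_[p]), (0 : ℤ_[p]))) : G)}).topologicalClosure
  have hzC : z ∈ C := Subgroup.le_topologicalClosure _ (Subgroup.subset_closure (by simp))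
  have haC : (eA.symm (ofAdd ((1 : ℤ_[p]), (0 : ℤ_[p]))) : G) ∈ C :=
    Subgroup.le_topologicalClosure _ (Subgroup.subset_closure (by simp))
  set F : Multiplicative (ℤ_[p] × ℤ_[p]) →* G := A.subtype.comp eA.symm.toMonoidHom
  have hAC : C.comap F = ⊤ := by
    refine Subgroup.eq_top_of_isClosed_of_subset PadicInt.topologicalClosure_closure_basis_eq_top
      ((Subgroup.isClosed_topologicalClosure _).preimage (continuous_subtype_val.comp heA')) ?_
    rintro _ (rfl | rfl)
    · exact haC
    · show (eA.symm _ : G) ∈ C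
      rw [hG.symm_ofAdd_zero_one]
      exact C.mul_mem (C.mul_mem hzC haC) (C.inv_mem hzC)
  rw [eq_top_iff, ← hG.sup_eq_top, sup_le_iff]
  refine ⟨(Subgroup.closure_le C).2 (Set.singleton_subset_iff.2 hzC), fun a ha => ?_⟩
  have : eA ⟨a, ha⟩ ∈ C.comap F := hAC ▸ Subgroup.mem_top _
  simpa [F] using this

theorem topGen_eq_two [T2Space G] (hG : IsCubeRootSemidirect A eA z) (heA' : Continuous eA.symm) :
    topGen G = 2 := by
  classical
  have hnc : ¬Commute z (eA.symm (ofAdd ((1 : ℤ_[p]), (0 : ℤ_[p]))) : G) := by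
    simpa using hG.not_commute_pow_symm_ofAdd one_ne_zero (by norm_num)
  refine topGen_eq (S := {z, (eA.symm (ofAdd (1, 0)) : G)}) ?_ ?_
    fun T hT => two_le_card_of_not_commute hnc hT
  · simpa using hG.topologicalClosure_closure_pair_eq_top heA'
  · exact Finset.card_pair fun h => hnc (h ▸ Commute.refl z)

theorem topGen_subgroup_eq_two [T2Space G] (hG : IsCubeRootSemidirect A eA z) (heA : Continuous eA)
    (heA' : Continuous eA.symm) : topGen A = 2 := by
  classical
  refine topGen_eq (S := {eA.symm (ofAdd (1, 0)), eA.symm (ofAdd (0, 1))}) ?_ ?_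
    fun T hT => two_le_card_of_le_of_isOpen eA heA heA' le_rfl (hG.isOpen heA') hT
  · simpa using topologicalClosure_closure_symm_basis_eq_top eA heA'
  · exact Finset.card_pair (by simp)

theorem dimension_eq_two [T2Space G] (q : ℕ) (hG : IsCubeRootSemidirect A eA z)
    (heA : Continuous eA) (heA' : Continuous eA.symm) : dimension q G = 2 := by
  refine IsLeast.csInf_eq ⟨⟨A, hG.isOpen heA', uniform_of_mulEquiv eA q heA',
    hG.topGen_subgroup_eq_two heA heA'⟩, ?_⟩
  rintro _ ⟨H, hH, hHu, rfl⟩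
  have hHA : H ≤ A := fun g hgH => by
    by_contra hgA
    have hg1 : (⟨g, hgH⟩ : H) ≠ 1 := fun h => hgA (by simp [show g = 1 from congrArg Subtype.val h])
    exact hHu.2.2 ⟨g, hgH⟩ hg1 (isOfFinOrder_iff_pow_eq_one.2
      ⟨3, three_pos, Subtype.ext (hG.pow_three_eq_one_of_notMem hgA)⟩)
  exact le_topGen hHu.1 fun S hS => two_le_card_of_le_of_isOpen eA heA heA' hHA hH hS

end IsCubeRootSemidirect

theorem IsCubeRootSemidirect.not_powerful {G : Type*} [Group G] [TopologicalSpace G]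
    [IsTopologicalGroup G] [T2Space G] {A : Subgroup G}
    {eA : A ≃* Multiplicative (ℤ_[3] × ℤ_[3])} {z : G} (hG : IsCubeRootSemidirect A eA z)
    (heA : Continuous eA) (heA' : Continuous eA.symm) : ¬Powerful 3 G := by
  intro hpow
  rw [Powerful, if_neg (by norm_num)] at hpow
  set K := (((powMonoidHom 3).range : Subgroup (Multiplicative (ℤ_[3] × ℤ_[3]))).comap
    eA.toMonoidHom).map A.subtype
  have hK : IsClosed (K : Set G) :=
    (A.isClosed_of_continuous_mulEquiv_symm eA heA').isClosedMap_subtype_val _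
      ((isCompact_range (continuous_pow 3)).isClosed.preimage heA)
  have hpPow : pPow 3 G ≤ K := by
    refine Subgroup.topologicalClosure_minimal _ ((Subgroup.closure_le K).2 ?_) hK
    rintro _ ⟨g, rfl⟩
    by_cases hg : g ∈ A
    · exact ⟨⟨g, hg⟩ ^ 3, ⟨eA ⟨g, hg⟩, (map_pow eA _ 3).symm⟩, rfl⟩
    · rw [hG.pow_three_eq_one_of_notMem hg]
      exact K.one_mem
  set a := eA.symm (ofAdd ((1 : ℤ_[3]), (0 : ℤ_[3])))
  have hcomm : z * a * z⁻¹ * (a : G)⁻¹ ∈ K := hpPow (hpow (Subgroup.le_topologicalClosure _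
    (Subgroup.commutator_mem_commutator (Subgroup.mem_top z) (Subgroup.mem_top (a : G)))))
  obtain ⟨b, ⟨m, hm⟩, hb⟩ := hcomm
  have hb' : b = eA.symm (ofAdd (0, 1)) * a⁻¹ := by
    apply Subtype.ext
    rw [show (b : G) = z * a * z⁻¹ * (a : G)⁻¹ from hb, Subgroup.coe_mul, Subgroup.coe_inv,
      hG.symm_ofAdd_zero_one]
  replace hm : m ^ 3 = eA b := hm
  rw [hb', map_mul, map_inv, MulEquiv.apply_symm_apply, MulEquiv.apply_symm_apply] at hm
  have h1 : (3 : ℤ_[3]) * (toAdd m).1 = -1 := by simpa using congrArg (fun x => (toAdd x).1) hm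
  exact PadicInt.natCast_mul_ne_neg_one (p := 3) _ (by exact_mod_cast h1)

theorem pro3_example_general
    (G : Type*) [Group G] [TopologicalSpace G] [IsTopologicalGroup G] (hpro : IsProP 3 G)
    (A : Subgroup G) (hA : A.Normal)
    (eA : A ≃* Multiplicative (ℤ_[3] × ℤ_[3]))
    (heA : Continuous eA) (heA' : Continuous eA.symm)
    (z : G) (hz3 : z ^ 3 = 1)
    (hsup : Subgroup.closure {z} ⊔ A = ⊤)
    (hact : ∀ a : A, eA ⟨z * a * z⁻¹, hA.conj_mem a a.2 z⟩ =
      Multiplicative.ofAdd (-(Multiplicative.toAdd (eA a)).2,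
        (Multiplicative.toAdd (eA a)).1 - (Multiplicative.toAdd (eA a)).2)) :
    IsSolvable G ∧ (∀ N : Subgroup G, N.Normal → (N : Set G).Finite → N = ⊥) ∧
      topGen G = 2 ∧ dimension 3 G = 2 ∧ ¬ Powerful 3 G := by
  have : T2Space G := hpro.2.2.1
  have hG : IsCubeRootSemidirect A eA z := ⟨hA, hz3, hsup, hact⟩
  exact ⟨hG.isSolvable, fun N hN hfin => hG.eq_bot_of_finite hN hfin, hG.topGen_eq_two heA',
    hG.dimension_eq_two 3 heA heA', hG.not_powerful heA heA'⟩

/-- Example 2.3: the pro-`3` group `G = ⟨z⟩ ⋉ ℤ₃[ξ]` with `z` of order `3` acting as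
multiplication by a primitive cube root of unity `ξ` (so that on `ℤ₃² = ℤ₃ + ℤ₃ξ` it sends
`(a, b)` to `(-b, a - b)`) is soluble with trivial periodic radical and
`d(G) = 2 = dim(G)`, but not powerful. -/
theorem pro3_example
    (G : Type*) [Group G] [TopologicalSpace G] [IsTopologicalGroup G] (hpro : IsProP 3 G)
    (A : Subgroup G) (hA : A.Normal)
    (eA : A ≃* Multiplicative (ℤ_[3] × ℤ_[3]))
    (heA : Continuous eA) (heA' : Continuous eA.symm)
    (z : G) (hz1 : z ≠ 1) (hz3 : z ^ 3 = 1)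
    (hsup : Subgroup.closure {z} ⊔ A = ⊤)
    (hinf : Subgroup.closure {z} ⊓ A = ⊥)
    (hact : ∀ a : A, eA ⟨z * a * z⁻¹, hA.conj_mem a a.2 z⟩ =
      Multiplicative.ofAdd (-(Multiplicative.toAdd (eA a)).2,
        (Multiplicative.toAdd (eA a)).1 - (Multiplicative.toAdd (eA a)).2)) :
    IsSolvable G ∧ (∀ N : Subgroup G, N.Normal → (N : Set G).Finite → N = ⊥) ∧
      topGen G = 2 ∧ dimension 3 G = 2 ∧ ¬ Powerful 3 G :=
  pro3_example_general G hpro A hA eA heA heA' z hz3 hsup hact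
end

section
/- Let p ≥ 3, and let H be a just-infinite pro-3 group with a self-centralizing open normal subgroup A ≅ Z_3² such that H/A is nontrivial and embeds in a Sylow pro-3 subgroup of GL_2(Z_3) acting without nonzero fixed points on A. If d(H) = 2, then H ≅ ⟨z⟩ ⋉ Z_3[ξ] where z has order 3 acting as multiplication by a primitive cube root of unity ξ. -/
open scoped Pointwise

/-- Just-infinite: infinite, and every nontrivial closed normal subgroup has finite index. -/
def JustInfinite (G : Type*) [Group G] [TopologicalSpace G] : Prop :=
  Infinite G ∧ ∀ N : Subgroup G, N.Normal → IsClosed (N : Set G) → N ≠ ⊥ → N.FiniteIndex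

/-!
`H/A` is a nontrivial finite `3`-group, so it has a central element of order `3`; a lift `z` acts
on `A` without fixed points, whence `z ^ 3 = 1` and `σ`, conjugation by `z`, satisfies
`σ ^ 2 + σ + 1 = 0`. This makes `A ≅ ℤ₃²` a free module of rank one over `ℤ₃[ξ] = ℤ₃[σ]`.
Conjugation by any `g` commutes with `σ`, so it is multiplication by some `u ∈ ℤ₃[ξ]` with
`u ^ 3 ^ k = 1`; the only such `u` are the powers of `ξ`, and self-centralisation then puts
`g` in `⟨z⟩A`.
-/

open IsLocalRing
open scoped QuadraticAlgebra

local notation "ℤ₃[ξ]" => QuadraticAlgebra ℤ_[3] (-1) (-1)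

namespace PadicInt

variable {p : ℕ} [Fact p.Prime]

theorem map_smul_of_addMonoidHom {M N : Type*} [AddCommGroup M] [Module ℤ_[p] M]
    [AddCommGroup N] [Module ℤ_[p] N] [IsHausdorff (maximalIdeal ℤ_[p]) N]
    (f : M →+ N) (c : ℤ_[p]) (m : M) : f (c • m) = c • f m := by
  rw [← sub_eq_zero]
  refine IsHausdorff.haus (I := maximalIdeal ℤ_[p]) inferInstance _ fun n ↦ SModEq.zero.mpr ?_
  obtain ⟨y, hy⟩ := Ideal.mem_span_singleton'.mp (appr_spec n c)
  have hc : c = (c.appr n : ℤ_[p]) + y * (p : ℤ_[p]) ^ n := by rw [hy]; ring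
  have hpn : (p : ℤ_[p]) ^ n ∈ maximalIdeal ℤ_[p] ^ n := by
    rw [maximalIdeal_eq_span_p, Ideal.span_singleton_pow]
    exact Ideal.mem_span_singleton_self _
  have hnat : ∀ (k : ℕ) (v : M), f ((k : ℤ_[p]) • v) = (k : ℤ_[p]) • f v := by
    simp [Nat.cast_smul_eq_nsmul]
  have key : f (c • m) - c • f m = (p : ℤ_[p]) ^ n • (f (y • m) - y • f m) := by
    rw [hc, add_smul, mul_comm y, mul_smul, map_add, ← Nat.cast_pow, hnat, hnat]
    module
  rw [key]
  exact Submodule.smul_mem_smul hpn Submodule.mem_top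

theorem dvd_of_not_isUnit {x : ℤ_[p]} (hx : ¬IsUnit x) : (p : ℤ_[p]) ∣ x :=
  (norm_lt_one_iff_dvd x).mp (not_isUnit_iff.mp hx)

theorem not_dvd_one : ¬(p : ℤ_[p]) ∣ 1 := fun h ↦
  not_isUnit_iff.mpr ((norm_lt_one_iff_dvd _).mpr dvd_rfl) (isUnit_of_dvd_one h)

theorem not_nine_dvd_sq_add_add_one (x : ℤ_[3]) : ¬(9 : ℤ_[3]) ∣ x ^ 2 + x + 1 := by
  intro h
  have h9 := map_dvd (toZModPow 2 : ℤ_[3] →+* ZMod (3 ^ 2)) h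
  simp only [map_ofNat, map_add, map_pow, map_one] at h9
  generalize toZModPow 2 x = t at h9
  revert t
  decide

theorem eq_one_of_pow_three_eq_one {x : ℤ_[3]} (h : x ^ 3 = 1) : x = 1 := by
  have : (x - 1) * (x ^ 2 + x + 1) = 0 := by linear_combination h
  rcases mul_eq_zero.mp this with h1 | h1
  · exact sub_eq_zero.mp h1
  · exact absurd (h1 ▸ dvd_zero _) (not_nine_dvd_sq_add_add_one x)

end PadicInt

theorem Module.End.sq_add_self_add_one_eq_zero_of_pow_three_eq_one {R M : Type*} [Semiring R]
    [AddCommGroup M] [Module R M] {σ : Module.End R M} (h3 : σ ^ 3 = 1)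
    (hfix : ∀ v, σ v = v → v = 0) : σ ^ 2 + σ + 1 = 0 := by
  refine LinearMap.ext fun v ↦ hfix _ ?_
  have := LinearMap.congr_fun h3 v
  simp only [pow_succ, pow_zero, one_mul, Module.End.mul_apply, Module.End.one_apply] at this
  simp [sq, this]
  abel

theorem Module.End.exists_isUnit_det_of_sq_add_self_add_one_eq_zero
    (σ : Module.End ℤ_[3] (ℤ_[3] × ℤ_[3])) (hσ : σ ^ 2 + σ + 1 = 0) :
    ∃ w : ℤ_[3] × ℤ_[3], IsUnit (w.1 * (σ w).2 - w.2 * (σ w).1) := by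
  by_contra! h
  obtain ⟨c', hc⟩ := PadicInt.dvd_of_not_isUnit (h (1, 0))
  obtain ⟨b', hb⟩ := PadicInt.dvd_of_not_isUnit (h (0, 1))
  set a := (σ (1, 0)).1
  -- the `(1,1)` entry of `σ ^ 2 + σ + 1 = 0`, with both off-diagonal entries divisible by `3`
  have h11 : a ^ 2 + a + 1 = -((σ (0, 1)).1 * (σ (1, 0)).2) := by
    have hv : σ (1, 0) = a • (1, 0) + (σ (1, 0)).2 • (0, 1) := by ext <;> simp [a]
    have : σ (σ (1, 0)) + σ (1, 0) + (1, 0) = 0 := by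
      simpa [sq] using LinearMap.congr_fun hσ (1, 0)
    replace := congrArg Prod.fst this
    rw [hv, map_add, map_smul, map_smul] at this
    simp only [Prod.fst_add, smul_eq_mul, Prod.smul_fst, Prod.smul_mk, Prod.fst_zero] at this
    linear_combination this
  push_cast at hb hc
  refine PadicInt.not_nine_dvd_sq_add_add_one a ⟨b' * c', ?_⟩
  linear_combination h11 + (σ (1, 0)).2 * hb + 3 * b' * hc

namespace QuadraticAlgebra

variable {R : Type*} [CommRing R] {a b : R}

theorem eq_lmul_of_map_omega_mul (f : Module.End R (QuadraticAlgebra R a b))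
    (hf : ∀ x, f (ω * x) = ω * f x) : f = Algebra.lmul R _ (f 1) := by
  ext1 ⟨x, y⟩
  have hxy : (⟨x, y⟩ : QuadraticAlgebra R a b) = x • 1 + y • (ω * 1) := by
    ext <;> simp
  rw [hxy, map_add, map_smul, map_smul, hf]
  simp [Algebra.coe_lmul_eq_mul, add_mul, mul_comm (f 1)]

theorem exists_linearEquiv_omega_mul_of_isUnit_det (σ : Module.End R (R × R))
    (hσ : ∀ v, σ (σ v) = a • v + b • σ v) (w : R × R)
    (hw : IsUnit (w.1 * (σ w).2 - w.2 * (σ w).1)) :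
    ∃ Λ : QuadraticAlgebra R a b ≃ₗ[R] R × R, ∀ x, Λ (ω * x) = σ (Λ x) := by
  obtain ⟨t, ht⟩ := hw.exists_left_inv
  set Λ : QuadraticAlgebra R a b →ₗ[R] R × R :=
    (LinearMap.smulRight (reₗ a b) w) + LinearMap.smulRight (imₗ a b) (σ w)
  -- Cramer's rule
  set Λinv : R × R →ₗ[R] QuadraticAlgebra R a b :=
    { toFun v := ⟨t * ((σ w).2 * v.1 - (σ w).1 * v.2), t * (w.1 * v.2 - w.2 * v.1)⟩
      map_add' v v' := by ext <;> simp <;> ring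
      map_smul' c v := by ext <;> simp <;> ring }
  refine ⟨LinearEquiv.ofLinearMap Λ Λinv ?_ ?_, fun x ↦ ?_⟩
  · refine LinearMap.ext fun v ↦ Prod.ext ?_ ?_ <;> simp [Λ, Λinv]
    · linear_combination v.1 * ht
    · linear_combination v.2 * ht
  · refine LinearMap.ext fun x ↦ QuadraticAlgebra.ext ?_ ?_ <;> simp [Λ, Λinv]
    · linear_combination x.re * ht
    · linear_combination x.im * ht
  · simp [Λ, hσ]
    module

theorem omega_pow_three : (ω : QuadraticAlgebra R (-1) (-1)) ^ 3 = 1 := by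
  ext <;> simp [pow_succ]

theorem mk_pow_three (x y : R) : (⟨x, y⟩ : QuadraticAlgebra R (-1) (-1)) ^ 3 =
    ⟨x ^ 3 + y ^ 3 - 3 * x * y ^ 2, 3 * (x ^ 2 * y - x * y ^ 2)⟩ := by
  ext <;> simp [pow_succ] <;> ring

theorem eq_omega_pow_of_pow_three_eq_one {u : ℤ₃[ξ]} (h : u ^ 3 = 1) : ∃ j, u = ω ^ j := by
  obtain ⟨x, y⟩ := u
  rw [mk_pow_three] at h
  obtain ⟨hre, him⟩ := QuadraticAlgebra.ext_iff.mp h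
  simp only [re_one, im_one] at hre him
  have h3 : (3 : ℤ_[3]) * (x * y * (x - y)) = 0 := by linear_combination him
  rcases mul_eq_zero.mp ((mul_eq_zero.mp h3).resolve_left (by norm_num)) with hxy | hxy
  · rcases mul_eq_zero.mp hxy with rfl | rfl
    · refine ⟨1, ?_⟩
      have := PadicInt.eq_one_of_pow_three_eq_one (x := y) (by linear_combination hre)
      ext <;> simp [this]
    · refine ⟨0, ?_⟩
      have := PadicInt.eq_one_of_pow_three_eq_one (x := x) (by linear_combination hre)
      ext <;> simp [this]
  · obtain rfl := sub_eq_zero.mp hxy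
    refine ⟨2, ?_⟩
    have := PadicInt.eq_one_of_pow_three_eq_one (x := -x) (by linear_combination hre)
    ext <;> simp [pow_two] <;> linear_combination -this

theorem pow_three_ne_omega (u : ℤ₃[ξ]) : u ^ 3 ≠ ω := by
  intro h
  have := congrArg im ((mk_eta u).symm ▸ h)
  rw [mk_pow_three] at this
  simp at this
  exact PadicInt.not_dvd_one (p := 3) (by exact_mod_cast (⟨_, this.symm⟩ : (3 : ℤ_[3]) ∣ 1))

theorem pow_three_ne_omega_sq (u : ℤ₃[ξ]) : u ^ 3 ≠ ω ^ 2 := by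
  intro h
  have := congrArg im ((mk_eta u).symm ▸ h)
  rw [mk_pow_three] at this
  simp [pow_two] at this
  exact PadicInt.not_dvd_one (p := 3)
    (by exact_mod_cast (dvd_neg.mp ⟨_, this.symm⟩ : (3 : ℤ_[3]) ∣ 1))

theorem eq_omega_pow_of_pow_three_pow_eq_one {u : ℤ₃[ξ]} {n : ℕ} (h : u ^ 3 ^ n = 1) :
    ∃ j, u = ω ^ j := by
  induction n generalizing u with
  | zero => exact ⟨0, by simpa using h⟩
  | succ n ih =>
    obtain ⟨i, hi⟩ := ih (u := u ^ 3) (by rwa [← pow_mul, ← pow_succ'])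
    rw [← Nat.div_add_mod i 3, pow_add, pow_mul, omega_pow_three, one_pow, one_mul] at hi
    have : i % 3 < 3 := Nat.mod_lt _ (by norm_num)
    interval_cases i % 3
    · exact eq_omega_pow_of_pow_three_eq_one hi
    · exact absurd (hi.trans (pow_one _)) (pow_three_ne_omega u)
    · exact absurd hi (pow_three_ne_omega_sq u)

theorem exists_linearEquiv_omega_mul
    (σ : Module.End ℤ_[3] (ℤ_[3] × ℤ_[3])) (hσ : σ ^ 2 + σ + 1 = 0) :
    ∃ Λ : ℤ₃[ξ] ≃ₗ[ℤ_[3]] ℤ_[3] × ℤ_[3], ∀ x, Λ (ω * x) = σ (Λ x) := by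
  obtain ⟨w, hw⟩ := Module.End.exists_isUnit_det_of_sq_add_self_add_one_eq_zero σ hσ
  refine exists_linearEquiv_omega_mul_of_isUnit_det σ (fun v ↦ ?_) w hw
  have : σ (σ v) + σ v + v = 0 := by simpa [sq] using LinearMap.congr_fun hσ v
  rw [neg_one_smul, neg_one_smul]
  linear_combination (norm := module) this

theorem exists_eq_pow_of_commute {V : Type*} [AddCommGroup V] [Module ℤ_[3] V]
    {σ τ : Module.End ℤ_[3] V} (Λ : ℤ₃[ξ] ≃ₗ[ℤ_[3]] V) (hΛ : ∀ x, Λ (ω * x) = σ (Λ x))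
    (hτσ : Commute τ σ) {n : ℕ} (hτ : τ ^ 3 ^ n = 1) : ∃ j, τ = σ ^ j := by
  set c := Λ.symm.conjRingEquiv
  have hσ : c σ = Algebra.lmul ℤ_[3] ℤ₃[ξ] ω := by
    refine LinearMap.ext fun x ↦ ?_
    simp [c, ← hΛ]
  have hτ' : c τ = Algebra.lmul ℤ_[3] ℤ₃[ξ] (c τ 1) := by
    refine eq_lmul_of_map_omega_mul _ fun x ↦ ?_
    have := congrArg (· x) ((hτσ.map c).eq)
    simpa [hσ] using this
  obtain ⟨j, hj⟩ := eq_omega_pow_of_pow_three_pow_eq_one (u := c τ 1) (n := n) <| by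
    apply Algebra.lmul_injective (R := ℤ_[3])
    rw [map_pow, ← hτ', ← map_pow, hτ, map_one, map_one]
  refine ⟨j, c.injective ?_⟩
  rw [hτ', hj, map_pow, map_pow, hσ]

end QuadraticAlgebra

section Conjugation

variable {H : Type*} [Group H] {A : Subgroup H} [A.Normal]
  {V : Type*} [AddCommGroup V] (p : ℕ) [Fact p.Prime] [Module ℤ_[p] V]
  [IsHausdorff (maximalIdeal ℤ_[p]) V] (eA : A ≃* Multiplicative V)

/-- Conjugation on `A` transported to `V`; additive maps into `V` are automatically
`ℤ_[p]`-linear. -/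
def conjEnd : H →* Module.End ℤ_[p] V where
  toFun g :=
    let f : V →+ V := AddMonoidHom.toMultiplicative.symm
      (eA.toMonoidHom.comp ((MulAut.conjNormal g).toMonoidHom.comp eA.symm.toMonoidHom))
    { f with map_smul' := PadicInt.map_smul_of_addMonoidHom f }
  map_one' := by ext; simp
  map_mul' g h := by ext; simp

variable {p eA}

theorem conjEnd_apply (g : H) (v : V) :
    conjEnd p eA g v =
      Multiplicative.toAdd (eA (MulAut.conjNormal g (eA.symm (Multiplicative.ofAdd v)))) :=
  rfl

theorem conjEnd_apply_eq_self_iff {g : H} {v : V} :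
    conjEnd p eA g v = v ↔ g * (eA.symm (Multiplicative.ofAdd v) : H) * g⁻¹ =
      eA.symm (Multiplicative.ofAdd v) := by
  rw [conjEnd_apply, ← Multiplicative.ofAdd.injective.eq_iff, ofAdd_toAdd,
    ← eA.symm.injective.eq_iff, MulEquiv.symm_apply_apply, ← Subtype.val_inj,
    MulAut.conjNormal_apply]

theorem conjEnd_eq_one_iff {g : H} : conjEnd p eA g = 1 ↔ g ∈ Subgroup.centralizer A := by
  simp only [LinearMap.ext_iff, Module.End.one_apply, conjEnd_apply_eq_self_iff,
    Subgroup.mem_centralizer_iff, SetLike.mem_coe]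
  refine ⟨fun h a ha ↦ ?_, fun h v ↦ ?_⟩
  · have := h (Multiplicative.toAdd (eA ⟨a, ha⟩))
    simp only [ofAdd_toAdd, MulEquiv.symm_apply_apply] at this
    exact (mul_inv_eq_iff_eq_mul.mp this).symm
  · rw [← h _ (eA.symm _).2, mul_inv_cancel_right]

theorem eq_zero_of_conjEnd_apply_eq_self {g : H} (hg : ∀ a ∈ A, g * a * g⁻¹ = a → a = 1)
    {v : V} (hv : conjEnd p eA g v = v) : v = 0 := by
  have := hg _ (eA.symm (Multiplicative.ofAdd v)).2 (conjEnd_apply_eq_self_iff.mp hv)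
  simpa using this

end Conjugation

namespace Subgroup

variable {H : Type*} [Group H] {A : Subgroup H}

theorem exists_mem_center_quotient_orderOf_eq {p : ℕ} [Fact p.Prime] [A.Normal] (hA : A ≠ ⊤)
    {k : ℕ} (hk : A.index = p ^ k) : ∃ q ∈ center (H ⧸ A), orderOf q = p := by
  have hcard : Nat.card (H ⧸ A) = p ^ k := by rw [← index_eq_card, hk]
  have : Finite (H ⧸ A) :=
    Nat.finite_of_card_ne_zero (hcard ▸ pow_ne_zero _ (Fact.out : p.Prime).ne_zero)
  have : Nontrivial (H ⧸ A) := by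
    rw [← Finite.one_lt_card_iff_nontrivial, ← index_eq_card]
    exact one_lt_index_of_ne_top hA
  have hG := IsPGroup.of_card hcard
  have := hG.center_nontrivial
  obtain ⟨n, hn, hc⟩ := (hG.to_subgroup _).nontrivial_iff_card.mp this
  obtain ⟨q, hq⟩ := exists_prime_orderOf_dvd_card' p (hc ▸ dvd_pow_self p hn.ne')
  exact ⟨q, q.2, by rwa [orderOf_coe]⟩

theorem commute_of_mk_mem_center {M : Type*} [Monoid M] [A.Normal] (ρ : H →* M)
    (hρ : ∀ a ∈ A, ρ a = 1) {z : H} (hz : (z : H ⧸ A) ∈ center (H ⧸ A)) (g : H) :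
    Commute (ρ g) (ρ z) := by
  have : (g * z)⁻¹ * (z * g) ∈ A := QuotientGroup.eq.mp (mem_center_iff.mp hz g)
  rw [Commute, SemiconjBy, ← map_mul, ← map_mul, ← mul_inv_cancel_left (g * z) (z * g),
    map_mul ρ (g * z), hρ _ this, mul_one]

theorem closure_singleton_sup_eq_top {M : Type*} [Monoid M] (ρ : H →* M)
    (hρ : ∀ g, ρ g = 1 → g ∈ A) {z : H} (h : ∀ g, ∃ j : ℕ, ρ g = ρ z ^ j) :
    closure {z} ⊔ A = ⊤ := by
  refine eq_top_iff.mpr fun g _ ↦ ?_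
  obtain ⟨j, hj⟩ := h g
  have hA : (z ^ j)⁻¹ * g ∈ A :=
    hρ _ (by rw [map_mul, hj, ← map_pow, ← map_mul, inv_mul_cancel, map_one])
  rw [← mul_inv_cancel_left (z ^ j) g]
  exact mul_mem_sup (pow_mem (subset_closure (Set.mem_singleton z)) j) hA

theorem closure_singleton_inf_eq_bot {p : ℕ} [Fact p.Prime] [A.Normal] {z : H} (hzA : z ∉ A)
    (hz : z ^ p = 1) : closure {z} ⊓ A = ⊥ := by
  refine (eq_bot_iff_forall _).mpr fun x ⟨hx, hxA⟩ ↦ ?_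
  obtain ⟨n, rfl⟩ := mem_closure_singleton.mp hx
  have hq : orderOf (z : H ⧸ A) = p :=
    orderOf_eq_prime (by rw [← QuotientGroup.mk_pow, hz, QuotientGroup.mk_one])
      (by rwa [Ne, QuotientGroup.eq_one_iff])
  obtain ⟨m, rfl⟩ : (p : ℤ) ∣ n := by
    rw [← hq, orderOf_dvd_iff_zpow_eq_one, ← QuotientGroup.mk_zpow, QuotientGroup.eq_one_iff]
    exact hxA
  rw [zpow_mul, zpow_natCast, hz, one_zpow]

end Subgroup

theorem exists_mulEquiv_conj_eq_omega_mul {H : Type*} [Group H] [TopologicalSpace H]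
    {A : Subgroup H} [A.Normal]
    {eA : A ≃* Multiplicative (ℤ_[3] × ℤ_[3])} (heA : Continuous eA) (heA' : Continuous eA.symm)
    {z : H} (Λ : ℤ₃[ξ] ≃ₗ[ℤ_[3]] ℤ_[3] × ℤ_[3])
    (hΛ : ∀ x, Λ (ω * x) = conjEnd 3 eA z (Λ x)) :
    ∃ e : A ≃* Multiplicative (ℤ_[3] × ℤ_[3]), Continuous e ∧ Continuous e.symm ∧
      ∀ a : A, e ⟨z * a * z⁻¹, ‹A.Normal›.conj_mem a a.2 z⟩ =
        Multiplicative.ofAdd (-(Multiplicative.toAdd (e a)).2,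
          (Multiplicative.toAdd (e a)).1 - (Multiplicative.toAdd (e a)).2) := by
  set Ψ := Λ.symm ≪≫ₗ QuadraticAlgebra.linearEquivTuple (-1) (-1) ≪≫ₗ
    LinearEquiv.finTwoArrow ℤ_[3] ℤ_[3]
  have hΨ := IsModuleTopology.continuous_of_linearMap Ψ.toLinearMap
  have hΨ' := IsModuleTopology.continuous_of_linearMap Ψ.symm.toLinearMap
  refine ⟨eA.trans (AddEquiv.toMultiplicative Ψ.toAddEquiv),
    continuous_ofAdd.comp (hΨ.comp (continuous_toAdd.comp heA)),
    heA'.comp (continuous_ofAdd.comp (hΨ'.comp continuous_toAdd)), fun a ↦ ?_⟩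
  have hconj : Multiplicative.toAdd (eA ⟨z * a * z⁻¹, ‹A.Normal›.conj_mem a a.2 z⟩) =
      conjEnd 3 eA z (Multiplicative.toAdd (eA a)) := by
    rw [conjEnd_apply, ofAdd_toAdd, MulEquiv.symm_apply_apply]
    congr 2
  have hΨσ : ∀ v, Ψ (conjEnd 3 eA z v) = (-(Ψ v).2, (Ψ v).1 - (Ψ v).2) := fun v ↦ by
    have hω : Λ.symm (conjEnd 3 eA z v) = ω * Λ.symm v :=
      Λ.symm_apply_eq.mpr (by rw [hΛ, Λ.apply_symm_apply])
    simp only [Ψ, LinearEquiv.trans_apply, hω]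
    obtain ⟨x, y⟩ := Λ.symm v
    simp [QuadraticAlgebra.omega_mul_mk, sub_eq_add_neg]
  change Multiplicative.ofAdd (Ψ (Multiplicative.toAdd (eA _))) = _
  rw [hconj, hΨσ]
  rfl

theorem justInfinite_pro3_structure_general
    (H : Type*) [Group H] [TopologicalSpace H] [IsTopologicalGroup H]
    (hpro : IsProP 3 H)
    (A : Subgroup H) (hA : A.Normal) (hAopen : IsOpen (A : Set H))
    (eA : A ≃* Multiplicative (ℤ_[3] × ℤ_[3]))
    (heA : Continuous eA) (heA' : Continuous eA.symm)
    (hself : Subgroup.centralizer (A : Set H) = A)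
    (hne : A ≠ ⊤)
    (hfpf : ∀ h : H, h ∉ A → ∀ a ∈ A, h * a * h⁻¹ = a → a = 1) :
    ∃ z : H, z ≠ 1 ∧ z ^ 3 = 1 ∧
      Subgroup.closure {z} ⊔ A = ⊤ ∧ Subgroup.closure {z} ⊓ A = ⊥ ∧
      ∃ e : A ≃* Multiplicative (ℤ_[3] × ℤ_[3]), Continuous e ∧ Continuous e.symm ∧
        ∀ a : A, e ⟨z * a * z⁻¹, hA.conj_mem a a.2 z⟩ =
          Multiplicative.ofAdd (-(Multiplicative.toAdd (e a)).2,
            (Multiplicative.toAdd (e a)).1 - (Multiplicative.toAdd (e a)).2) := by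
  obtain ⟨k, hk⟩ := hpro.2.2.2 A hA hAopen
  obtain ⟨q, hq, hq3⟩ := Subgroup.exists_mem_center_quotient_orderOf_eq hne hk
  obtain ⟨z, rfl⟩ := QuotientGroup.mk_surjective q
  have hzA : z ∉ A := fun h ↦ by simp [(QuotientGroup.eq_one_iff z).mpr h] at hq3
  have hz3 : z ^ 3 = 1 := hfpf z hzA _
    (by rw [← QuotientGroup.eq_one_iff, QuotientGroup.mk_pow, ← hq3, pow_orderOf_eq_one]) (by group)
  set ρ := conjEnd 3 eA
  have hρ : ∀ g, ρ g = 1 ↔ g ∈ A := fun g ↦ by rw [conjEnd_eq_one_iff, hself]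
  have hσ : ρ z ^ 2 + ρ z + 1 = 0 :=
    Module.End.sq_add_self_add_one_eq_zero_of_pow_three_eq_one (by rw [← map_pow, hz3, map_one])
      fun _ ↦ eq_zero_of_conjEnd_apply_eq_self (hfpf z hzA)
  obtain ⟨Λ, hΛ⟩ := QuadraticAlgebra.exists_linearEquiv_omega_mul (ρ z) hσ
  have hpow : ∀ g, ρ g ^ 3 ^ k = 1 := fun g ↦ by
    rw [← map_pow, hρ, ← hk]
    exact A.pow_index_mem g
  refine ⟨z, fun h ↦ hzA (h ▸ A.one_mem), hz3,
    Subgroup.closure_singleton_sup_eq_top ρ (fun g ↦ (hρ g).mp) fun g ↦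
      QuadraticAlgebra.exists_eq_pow_of_commute Λ hΛ
        (Subgroup.commute_of_mk_mem_center ρ (fun a ↦ (hρ a).mpr) hq g) (hpow g),
    Subgroup.closure_singleton_inf_eq_bot hzA hz3,
    exists_mulEquiv_conj_eq_omega_mul heA heA' Λ hΛ⟩

/-- Claim in the proof of Theorem 1.3: a just-infinite pro-`3` group `H` with a
self-centralising open normal subgroup `A ≅ ℤ₃²` on which the nontrivial quotient `H/A` acts
without nonzero fixed points, and with `d(H) = 2`, is isomorphic to `⟨z⟩ ⋉ ℤ₃[ξ]` with
`z` of order `3` acting as multiplication by a primitive cube root of unity `ξ`. -/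
theorem justInfinite_pro3_structure
    (H : Type*) [Group H] [TopologicalSpace H] [IsTopologicalGroup H]
    (hpro : IsProP 3 H) (hji : JustInfinite H)
    (A : Subgroup H) (hA : A.Normal) (hAopen : IsOpen (A : Set H))
    (eA : A ≃* Multiplicative (ℤ_[3] × ℤ_[3]))
    (heA : Continuous eA) (heA' : Continuous eA.symm)
    (hself : Subgroup.centralizer (A : Set H) = A)
    (hne : A ≠ ⊤)
    (hfpf : ∀ h : H, h ∉ A → ∀ a ∈ A, h * a * h⁻¹ = a → a = 1)
    (hd : topGen H = 2) :
    ∃ z : H, z ≠ 1 ∧ z ^ 3 = 1 ∧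
      Subgroup.closure {z} ⊔ A = ⊤ ∧ Subgroup.closure {z} ⊓ A = ⊥ ∧
      ∃ e : A ≃* Multiplicative (ℤ_[3] × ℤ_[3]), Continuous e ∧ Continuous e.symm ∧
        ∀ a : A, e ⟨z * a * z⁻¹, hA.conj_mem a a.2 z⟩ =
          Multiplicative.ofAdd (-(Multiplicative.toAdd (e a)).2,
            (Multiplicative.toAdd (e a)).1 - (Multiplicative.toAdd (e a)).2) :=
  justInfinite_pro3_structure_general H hpro A hA hAopen eA heA heA' hself hne hfpf
end
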